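/- Let Σ be a p×p real positive semidefinite matrix, X₁,…,X_N ∈ ℝ^p, ξ₁,…,ξ_N ∈ ℝ, α* ∈ ℝ^p, and Y_i = ⟨X_i, α*⟩ + ξ_i for each i. Fix ρ > 0 and 0 < r* ≤ r. Define Q_{r*,ρ} = sup { |(1/N) Σ_{i=1}^N ⟨X_i, v⟩² − ‖Σ^{1/2}v‖₂²| : v ∈ ℝ^p, ‖v‖₂ ≤ ρ, ‖Σ^{1/2}v‖₂ ≤ r* } and M_{r*,ρ} = sup { |(2/N) Σ_{i=1}^N ξ_i ⟨X_i, v⟩| : v ∈ ℝ^p, ‖v‖₂ ≤ ρ, ‖Σ^{1/2}v‖₂ ≤ r* }. Then for every α ∈ ℝ^p with ‖α − α*‖₂ ≤ ρ and ‖Σ^{1/2}(α − α*)‖₂ = r, setting θ = r*/r ∈ (0,1], one has P_N𝓛_α ≥ θ^{−2} ((r*)² − Q_{r*,ρ}) − θ^{−1} M_{r*,ρ}. -/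

import Mathlib

open Matrix Finset

/-- The positive semidefinite square root of a positive semidefinite matrix
(the definition `Matrix.PosSemidef.sqrt` of the older Mathlib, since removed). -/
noncomputable def Matrix.PosSemidef.sqrt {n : Type*} [Fintype n] [DecidableEq n]
    {A : Matrix n n ℝ} (hA : A.PosSemidef) : Matrix n n ℝ :=
  hA.1.eigenvectorUnitary.1 * diagonal (Real.sqrt ∘ hA.1.eigenvalues) *
    (star hA.1.eigenvectorUnitary : Matrix n n ℝ)

/-- The empirical excess squared risk
`P_N𝓛_α = (1/N) Σ_i [(⟨X_i,α⟩ − Y_i)² − (⟨X_i,α*⟩ − Y_i)²]`. -/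
noncomputable def empExcessRisk {N p : ℕ} (X : Fin N → Fin p → ℝ) (Y : Fin N → ℝ)
    (αstar α : Fin p → ℝ) : ℝ :=
  (1 / (N : ℝ)) * ∑ i, ((∑ j, X i j * α j - Y i) ^ 2 - (∑ j, X i j * αstar j - Y i) ^ 2)

/-- Supremum of the (absolute) quadratic process over
`{v : ‖v‖₂ ≤ ρ, ‖Σ^{1/2}v‖₂ ≤ r*}`. -/
noncomputable def quadProcSup {N p : ℕ} (X : Fin N → Fin p → ℝ)
    (S : Matrix (Fin p) (Fin p) ℝ) (ρ rstar : ℝ) : ℝ :=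
  sSup {x : ℝ | ∃ v : Fin p → ℝ, Real.sqrt (∑ j, v j ^ 2) ≤ ρ ∧
    Real.sqrt (∑ i, (S.mulVec v i) ^ 2) ≤ rstar ∧
    x = |(1 / (N : ℝ)) * ∑ i, (∑ j, X i j * v j) ^ 2 - ∑ i, (S.mulVec v i) ^ 2|}

/-- Supremum of the (absolute) multiplier process over
`{v : ‖v‖₂ ≤ ρ, ‖Σ^{1/2}v‖₂ ≤ r*}`. -/
noncomputable def multProcSup {N p : ℕ} (X : Fin N → Fin p → ℝ) (ξ : Fin N → ℝ)
    (S : Matrix (Fin p) (Fin p) ℝ) (ρ rstar : ℝ) : ℝ :=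
  sSup {x : ℝ | ∃ v : Fin p → ℝ, Real.sqrt (∑ j, v j ^ 2) ≤ ρ ∧
    Real.sqrt (∑ i, (S.mulVec v i) ^ 2) ≤ rstar ∧
    x = |(2 / (N : ℝ)) * ∑ i, ξ i * (∑ j, X i j * v j)|}

/-! Write `w = α - α*`. Expanding the squares, `P_N𝓛_α` is the quadratic process minus the
multiplier process at `w`, which are homogeneous of degree 2 and 1 in `w`. The rescaled vector
`θ w` satisfies `‖θ w‖₂ ≤ ρ` and `‖Σ^{1/2} θ w‖₂ = r*`, so both processes at `θ w` are controlled
by `Q_{r*,ρ}` and `M_{r*,ρ}`; undoing the scaling gives the factors `θ⁻²` and `θ⁻¹`. The suprema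
are finite because the processes are continuous and the `ρ`-ball is compact. -/

lemma sqrt_sum_sq_smul {ι : Type*} [Fintype ι] (c : ℝ) (v : ι → ℝ) :
    Real.sqrt (∑ j, (c • v) j ^ 2) = |c| * Real.sqrt (∑ j, v j ^ 2) := by
  simp only [Pi.smul_apply, smul_eq_mul, mul_pow, ← mul_sum]
  rw [Real.sqrt_mul (sq_nonneg c), Real.sqrt_sq_eq_abs]

section EmpiricalProcesses

variable {N p : ℕ}

noncomputable def quadProc (X : Fin N → Fin p → ℝ) (v : Fin p → ℝ) : ℝ :=
  (1 / (N : ℝ)) * ∑ i, (X i ⬝ᵥ v) ^ 2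

noncomputable def multProc (X : Fin N → Fin p → ℝ) (ξ : Fin N → ℝ) (v : Fin p → ℝ) : ℝ :=
  (2 / (N : ℝ)) * ∑ i, ξ i * (X i ⬝ᵥ v)

lemma quadProc_smul (X : Fin N → Fin p → ℝ) (c : ℝ) (v : Fin p → ℝ) :
    quadProc X (c • v) = c ^ 2 * quadProc X v := by
  simp only [quadProc, dotProduct_smul, smul_eq_mul, mul_pow, ← mul_sum]
  ring

lemma multProc_smul (X : Fin N → Fin p → ℝ) (ξ : Fin N → ℝ) (c : ℝ) (v : Fin p → ℝ) :
    multProc X ξ (c • v) = c * multProc X ξ v := by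
  simp only [multProc, dotProduct_smul, smul_eq_mul, mul_left_comm _ c, ← mul_sum]

lemma empExcessRisk_eq_quadProc_sub_multProc (X : Fin N → Fin p → ℝ) {ξ Y : Fin N → ℝ}
    {αstar : Fin p → ℝ} (hY : ∀ i, Y i = X i ⬝ᵥ αstar + ξ i) (α : Fin p → ℝ) :
    empExcessRisk X Y αstar α = quadProc X (α - αstar) - multProc X ξ (α - αstar) := by
  have hterm : ∀ i, (X i ⬝ᵥ α - Y i) ^ 2 - (X i ⬝ᵥ αstar - Y i) ^ 2
      = (X i ⬝ᵥ (α - αstar)) ^ 2 - 2 * (ξ i * X i ⬝ᵥ (α - αstar)) := by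
    intro i
    rw [hY, dotProduct_sub]
    ring
  change (1 / (N : ℝ)) * ∑ i, ((X i ⬝ᵥ α - Y i) ^ 2 - (X i ⬝ᵥ αstar - Y i) ^ 2) = _
  simp only [hterm, sum_sub_distrib, ← mul_sum, quadProc, multProc]
  ring

lemma bddAbove_setOf_sqrt_sum_sq_le {ι : Type*} [Fintype ι] {f : (ι → ℝ) → ℝ}
    (hf : Continuous f) (ρ : ℝ) (P : (ι → ℝ) → Prop) :
    BddAbove {x : ℝ | ∃ v : ι → ℝ, Real.sqrt (∑ j, v j ^ 2) ≤ ρ ∧ P v ∧ x = f v} := by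
  have hK : IsCompact {v : ι → ℝ | Real.sqrt (∑ j, v j ^ 2) ≤ ρ} := by
    refine Metric.isCompact_of_isClosed_isBounded
      (isClosed_le (by fun_prop) continuous_const) ?_
    refine (Metric.isBounded_closedBall (x := 0) (r := ρ)).subset fun v hv => ?_
    rw [mem_closedBall_zero_iff, pi_norm_le_iff_of_nonneg ((Real.sqrt_nonneg _).trans hv)]
    intro j
    rw [Real.norm_eq_abs, ← Real.sqrt_sq_eq_abs]
    exact (Real.sqrt_le_sqrt (single_le_sum (fun j _ => sq_nonneg (v j)) (mem_univ j))).trans hv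
  refine (hK.bddAbove_image hf.continuousOn).mono ?_
  rintro x ⟨v, hv, -, rfl⟩
  exact ⟨v, hv, rfl⟩

lemma abs_quadProc_sub_le_quadProcSup (X : Fin N → Fin p → ℝ) (S : Matrix (Fin p) (Fin p) ℝ)
    {ρ rstar : ℝ} {v : Fin p → ℝ} (hvρ : Real.sqrt (∑ j, v j ^ 2) ≤ ρ)
    (hvr : Real.sqrt (∑ i, (S *ᵥ v) i ^ 2) ≤ rstar) :
    |quadProc X v - ∑ i, (S *ᵥ v) i ^ 2| ≤ quadProcSup X S ρ rstar :=
  le_csSup (bddAbove_setOf_sqrt_sum_sq_le (by fun_prop) ρ _) ⟨v, hvρ, hvr, rfl⟩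

lemma abs_multProc_le_multProcSup (X : Fin N → Fin p → ℝ) (ξ : Fin N → ℝ)
    (S : Matrix (Fin p) (Fin p) ℝ) {ρ rstar : ℝ} {v : Fin p → ℝ}
    (hvρ : Real.sqrt (∑ j, v j ^ 2) ≤ ρ) (hvr : Real.sqrt (∑ i, (S *ᵥ v) i ^ 2) ≤ rstar) :
    |multProc X ξ v| ≤ multProcSup X ξ S ρ rstar :=
  le_csSup (bddAbove_setOf_sqrt_sum_sq_le (by fun_prop) ρ _) ⟨v, hvρ, hvr, rfl⟩

end EmpiricalProcesses

theorem stmt8_general (N p : ℕ) (A : Matrix (Fin p) (Fin p) ℝ) (hA : A.PosSemidef)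
    (X : Fin N → Fin p → ℝ) (ξ : Fin N → ℝ) (αstar : Fin p → ℝ)
    (Y : Fin N → ℝ) (hY : ∀ i, Y i = (∑ j, X i j * αstar j) + ξ i)
    (ρ rstar r : ℝ) (hrstar : 0 < rstar) (hrr : rstar ≤ r)
    (α : Fin p → ℝ)
    (hαρ : Real.sqrt (∑ j, (α j - αstar j) ^ 2) ≤ ρ)
    (hαr : Real.sqrt (∑ i, (hA.sqrt.mulVec (fun j => α j - αstar j) i) ^ 2) = r) :
    ((rstar / r)⁻¹) ^ 2 * (rstar ^ 2 - quadProcSup X hA.sqrt ρ rstar)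
        - (rstar / r)⁻¹ * multProcSup X ξ hA.sqrt ρ rstar
      ≤ empExcessRisk X Y αstar α := by
  have hr : 0 < r := hrstar.trans_le hrr
  set θ := rstar / r
  have hθ : 0 < θ := div_pos hrstar hr
  change Real.sqrt (∑ j, (α - αstar) j ^ 2) ≤ ρ at hαρ
  change Real.sqrt (∑ i, (hA.sqrt *ᵥ (α - αstar)) i ^ 2) = r at hαr
  have hvρ : Real.sqrt (∑ j, (θ • (α - αstar)) j ^ 2) ≤ ρ := by
    rw [sqrt_sum_sq_smul, abs_of_pos hθ]
    exact (mul_le_of_le_one_left (Real.sqrt_nonneg _) ((div_le_one hr).mpr hrr)).trans hαρ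
  have hvr : Real.sqrt (∑ i, (hA.sqrt *ᵥ (θ • (α - αstar))) i ^ 2) = rstar := by
    rw [mulVec_smul, sqrt_sum_sq_smul, hαr, abs_of_pos hθ, div_mul_cancel₀ _ hr.ne']
  have hQ := abs_quadProc_sub_le_quadProcSup X hA.sqrt hvρ hvr.le
  have hM := abs_multProc_le_multProcSup X ξ hA.sqrt hvρ hvr.le
  have hvr2 : ∑ i, (hA.sqrt *ᵥ (θ • (α - αstar))) i ^ 2 = rstar ^ 2 := by
    rw [← hvr, Real.sq_sqrt (by positivity)]
  rw [hvr2] at hQ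
  have hw : α - αstar = θ⁻¹ • θ • (α - αstar) := by rw [inv_smul_smul₀ hθ.ne']
  rw [empExcessRisk_eq_quadProc_sub_multProc X hY, hw, quadProc_smul, multProc_smul]
  gcongr
  · linarith [(abs_le.mp hQ).1]
  · exact (le_abs_self _).trans hM

/-- the quadratic–multiplier lower bound on the empirical excess
risk: for `α` with `‖α − α*‖₂ ≤ ρ` and `‖Σ^{1/2}(α − α*)‖₂ = r ≥ r*`, writing
`θ = r*/r`, one has `P_N𝓛_α ≥ θ⁻²((r*)² − Q_{r*,ρ}) − θ⁻¹ M_{r*,ρ}`. -/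
theorem stmt8 (N p : ℕ) (A : Matrix (Fin p) (Fin p) ℝ) (hA : A.PosSemidef)
    (X : Fin N → Fin p → ℝ) (ξ : Fin N → ℝ) (αstar : Fin p → ℝ)
    (Y : Fin N → ℝ) (hY : ∀ i, Y i = (∑ j, X i j * αstar j) + ξ i)
    (ρ rstar r : ℝ) (hρ : 0 < ρ) (hrstar : 0 < rstar) (hrr : rstar ≤ r)
    (α : Fin p → ℝ)
    (hαρ : Real.sqrt (∑ j, (α j - αstar j) ^ 2) ≤ ρ)
    (hαr : Real.sqrt (∑ i, (hA.sqrt.mulVec (fun j => α j - αstar j) i) ^ 2) = r) :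
    ((rstar / r)⁻¹) ^ 2 * (rstar ^ 2 - quadProcSup X hA.sqrt ρ rstar)
        - (rstar / r)⁻¹ * multProcSup X ξ hA.sqrt ρ rstar
      ≤ empExcessRisk X Y αstar α :=
  stmt8_general N p A hA X ξ αstar Y hY ρ rstar r hrstar hrr α hαρ hαr
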